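/- arXiv:2206.11835 — 2 statements merged into one kernel-verified Lean document; each statement's English description precedes it below -/
import Mathlib

section
/- Let A be a nilpotent n×n complex matrix and A* its conjugate transpose. Then the Hilbert–Schmidt norms satisfy ‖[A, A*]‖² ≥ ‖A‖⁴ / 4^{n−1}, where [A,A*] = AA* − A*A and ‖M‖² = tr(MM*). -/
open Matrix Finset

noncomputable def NN {m : ℕ} (M : Matrix (Fin m) (Fin m) ℂ) : ℝ := ∑ i, ∑ j, ‖M i j‖ ^ 2

lemma mul_star_eq (z : ℂ) : z * star z = ((‖z‖ ^ 2 : ℝ) : ℂ) := by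
  rw [show (star z) = (starRingEnd ℂ) z from rfl, Complex.mul_conj, Complex.normSq_eq_norm_sq]

lemma NN_nonneg {m : ℕ} (M : Matrix (Fin m) (Fin m) ℂ) : 0 ≤ NN M := by
  unfold NN; positivity

lemma trace_re_eq_NN {m : ℕ} (M : Matrix (Fin m) (Fin m) ℂ) :
    (Matrix.trace (M * Mᴴ)).re = NN M := by
  unfold NN
  simp [Matrix.trace, Matrix.diag, Matrix.mul_apply, Matrix.conjTranspose_apply,
    Complex.re_sum, Complex.mul_conj, Complex.normSq_eq_norm_sq,
    ← Complex.ofReal_pow]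

lemma NN_eq_norm_sq {m : ℕ} (M : Matrix (Fin m) (Fin m) ℂ) :
    NN M = ‖(WithLp.equiv 2 ((Fin m × Fin m) → ℂ)).symm (fun p => M p.1 p.2)‖ ^ 2 := by
  rw [EuclideanSpace.norm_eq, Real.sq_sqrt (by positivity)]
  unfold NN
  rw [Fintype.sum_prod_type]
  rfl

lemma sqrt_NN_add {m : ℕ} (P Q : Matrix (Fin m) (Fin m) ℂ) :
    Real.sqrt (NN (P + Q)) ≤ Real.sqrt (NN P) + Real.sqrt (NN Q) := by
  rw [NN_eq_norm_sq P, NN_eq_norm_sq Q, NN_eq_norm_sq (P + Q),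
    Real.sqrt_sq (norm_nonneg _), Real.sqrt_sq (norm_nonneg _), Real.sqrt_sq (norm_nonneg _)]
  have h : (WithLp.equiv 2 ((Fin m × Fin m) → ℂ)).symm (fun p => (P + Q) p.1 p.2)
      = (WithLp.equiv 2 ((Fin m × Fin m) → ℂ)).symm (fun p => P p.1 p.2)
      + (WithLp.equiv 2 ((Fin m × Fin m) → ℂ)).symm (fun p => Q p.1 p.2) := rfl
  rw [h]
  exact norm_add_le _ _

lemma mat_conj_mul {m : ℕ} (U M N : Matrix (Fin m) (Fin m) ℂ) (h2 : U * Uᴴ = 1) :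
    (Uᴴ * M * U) * (Uᴴ * N * U) = Uᴴ * (M * N) * U := by
  have h : U * (Uᴴ * (N * U)) = N * U := by rw [← Matrix.mul_assoc, h2, Matrix.one_mul]
  simp only [Matrix.mul_assoc, h]

lemma conjT_conj {m : ℕ} (U A : Matrix (Fin m) (Fin m) ℂ) :
    (Uᴴ * A * U)ᴴ = Uᴴ * Aᴴ * U := by
  rw [Matrix.conjTranspose_mul, Matrix.conjTranspose_mul, Matrix.conjTranspose_conjTranspose,
    Matrix.mul_assoc]

lemma trace_conj {m : ℕ} (U X : Matrix (Fin m) (Fin m) ℂ) (h2 : U * Uᴴ = 1) :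
    Matrix.trace (Uᴴ * X * U) = Matrix.trace X := by
  rw [Matrix.trace_mul_cycle, h2, Matrix.one_mul]

lemma NN_conj {m : ℕ} (U M : Matrix (Fin m) (Fin m) ℂ) (h2 : U * Uᴴ = 1) :
    NN (Uᴴ * M * U) = NN M := by
  rw [← trace_re_eq_NN, ← trace_re_eq_NN M, conjT_conj, mat_conj_mul U M Mᴴ h2, trace_conj _ _ h2]

lemma mat_conj_pow {m : ℕ} (U A : Matrix (Fin m) (Fin m) ℂ) (h1 : Uᴴ * U = 1) (h2 : U * Uᴴ = 1)
    (k : ℕ) : (Uᴴ * A * U) ^ k = Uᴴ * A ^ k * U := by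
  induction k with
  | zero => simp [Matrix.mul_one, h1]
  | succ k ih => rw [pow_succ, ih, pow_succ, mat_conj_mul U _ _ h2]

lemma det_eq_zero_of_nilpotent {m : ℕ} (A : Matrix (Fin (m+1)) (Fin (m+1)) ℂ)
    (hA : IsNilpotent A) : A.det = 0 := by
  obtain ⟨k, hk⟩ := hA
  have hk1 : A ^ (k+1) = 0 := by rw [pow_succ, hk, zero_mul]
  have h : A.det ^ (k+1) = 0 := by rw [← Matrix.det_pow, hk1, Matrix.det_zero]
  exact (pow_eq_zero_iff (Nat.succ_ne_zero k)).mp h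

lemma NN_small {m : ℕ} (hm : m ≤ 1) (M : Matrix (Fin m) (Fin m) ℂ) (hM : IsNilpotent M) :
    NN M = 0 := by
  rcases Nat.lt_or_ge m 1 with h | h
  · have hm0 : m = 0 := by omega
    subst hm0
    simp [NN]
  · have hm1 : m = 1 := by omega
    subst hm1
    have hdet : M.det = 0 := det_eq_zero_of_nilpotent M hM
    rw [Matrix.det_fin_one] at hdet
    have : ∀ i j : Fin 1, M i j = 0 := by
      intro i j
      rw [Subsingleton.elim i 0, Subsingleton.elim j 0, hdet]
    simp [NN, this]

lemma exists_unitary {m : ℕ} (A : Matrix (Fin (m+1)) (Fin (m+1)) ℂ) (hA : IsNilpotent A) :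
    ∃ U : Matrix (Fin (m+1)) (Fin (m+1)) ℂ, Uᴴ * U = 1 ∧ (∀ i, (Uᴴ * A * U) i 0 = 0) := by
  classical
  obtain ⟨w, hw, hwv⟩ := (Matrix.exists_mulVec_eq_zero_iff).mpr (det_eq_zero_of_nilpotent A hA)
  set E := EuclideanSpace ℂ (Fin (m+1))
  set w' : E := (WithLp.equiv 2 (Fin (m+1) → ℂ)).symm w with hw'def
  have hw'0 : w' ≠ 0 := by
    intro h
    apply hw
    have := congrArg (WithLp.equiv 2 (Fin (m+1) → ℂ)) h
    simpa [hw'def] using this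
  set v₀ : Fin (m+1) → ℂ := ((‖w'‖ : ℂ))⁻¹ • w with hv₀def
  set v : E := (WithLp.equiv 2 (Fin (m+1) → ℂ)).symm v₀ with hvdef
  have hAv : A.mulVec v₀ = 0 := by
    rw [hv₀def, Matrix.mulVec_smul, hwv, smul_zero]
  have hnv : ‖v‖ = 1 := by
    have hv : v = ((‖w'‖ : ℂ))⁻¹ • w' := rfl
    rw [hv, norm_smul]
    simp only [norm_inv, Complex.norm_real, Real.norm_eq_abs, abs_norm]
    rw [abs_of_nonneg (norm_nonneg _)]
    exact inv_mul_cancel₀ (norm_ne_zero_iff.mpr hw'0)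
  -- orthonormal singleton family
  have hs : Orthonormal ℂ (Set.restrict {(0 : Fin (m+1))} (fun _ => v)) := by
    rw [orthonormal_iff_ite]
    intro i j
    have hij : i = j := Subtype.ext (by
      have h1 := i.2
      have h2 := j.2
      simp only [Set.mem_singleton_iff] at h1 h2
      rw [h1, h2])
    subst hij
    rw [if_pos rfl]
    rw [@inner_self_eq_norm_sq_to_K ℂ]
    change ((‖v‖ : ℝ) : ℂ) ^ 2 = 1
    rw [hnv]
    norm_num
  have hcard : Module.finrank ℂ E = Fintype.card (Fin (m+1)) := by
    simp [E, finrank_euclideanSpace_fin]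
  obtain ⟨b, hb⟩ := Orthonormal.exists_orthonormalBasis_extension_of_card_eq hcard hs
  have hb0 : b 0 = v := hb 0 rfl
  set U : Matrix (Fin (m+1)) (Fin (m+1)) ℂ := Matrix.of (fun i j => b j i) with hUdef
  have horth := b.orthonormal
  rw [orthonormal_iff_ite] at horth
  have hU1 : Uᴴ * U = 1 := by
    ext j k
    have hin := horth j k
    rw [PiLp.inner_apply] at hin
    simp only [RCLike.inner_apply] at hin
    simp only [Matrix.mul_apply, Matrix.conjTranspose_apply, hUdef, Matrix.of_apply,
      Matrix.one_apply]
    rw [← hin]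
    exact Finset.sum_congr rfl (fun _ _ => mul_comm _ _)
  refine ⟨U, hU1, ?_⟩
  have hU0 : ∀ k, U k 0 = v₀ k := by
    intro k
    show b 0 k = v₀ k
    rw [hb0]
    rfl
  intro i
  have h1 : (Uᴴ * A * U) i 0 = ((Uᴴ * A).mulVec v₀) i := by
    rw [Matrix.mul_apply, Matrix.mulVec, dotProduct]
    exact Finset.sum_congr rfl (fun k _ => by rw [hU0 k])
  rw [h1, ← Matrix.mulVec_mulVec, hAv, Matrix.mulVec_zero]
  rfl

set_option maxHeartbeats 8000000 in
lemma key : ∀ n (A : Matrix (Fin n) (Fin n) ℂ), IsNilpotent A →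
    NN A ^ 2 ≤ 4 ^ (n - 1) * NN (A * Aᴴ - Aᴴ * A) := by
  intro n
  induction n with
  | zero =>
    intro A _
    simp [NN]
  | succ n ih =>
    intro A hA
    obtain ⟨U, hU1, hcol⟩ := exists_unitary A hA
    have hU2 : U * Uᴴ = 1 := mul_eq_one_comm.mp hU1
    set B : Matrix (Fin (n+1)) (Fin (n+1)) ℂ := Uᴴ * A * U with hBdef
    have hNA : NN A = NN B := (NN_conj U A hU2).symm
    have hBH : Bᴴ = Uᴴ * Aᴴ * U := conjT_conj U A
    set C : Matrix (Fin (n+1)) (Fin (n+1)) ℂ := B * Bᴴ - Bᴴ * B with hCdef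
    have hCeq : C = Uᴴ * (A * Aᴴ - Aᴴ * A) * U := by
      rw [hCdef, hBH, hBdef, mat_conj_mul U A Aᴴ hU2, mat_conj_mul U Aᴴ A hU2,
        Matrix.mul_sub, Matrix.sub_mul]
    have hNC : NN (A * Aᴴ - Aᴴ * A) = NN C := by rw [hCeq, NN_conj _ _ hU2]
    have hBnil : IsNilpotent B := by
      obtain ⟨k, hk⟩ := hA
      exact ⟨k, by rw [hBdef, mat_conj_pow U A hU1 hU2 k, hk, Matrix.mul_zero, Matrix.zero_mul]⟩
    set b : Fin n → ℂ := fun i => B 0 i.succ with hbdef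
    set x : ℝ := ∑ i, ‖b i‖ ^ 2 with hxdef
    have hx0 : 0 ≤ x := by
      rw [hxdef]; exact Finset.sum_nonneg fun i _ => sq_nonneg _
    set B' : Matrix (Fin n) (Fin n) ℂ := B.submatrix Fin.succ Fin.succ with hB'def
    set C' : Matrix (Fin n) (Fin n) ℂ := B' * B'ᴴ - B'ᴴ * B' with hC'def
    set D : Matrix (Fin n) (Fin n) ℂ := Matrix.of (fun i j => C i.succ j.succ) with hDdef
    set R : Matrix (Fin n) (Fin n) ℂ := Matrix.of (fun i j => (starRingEnd ℂ) (b i) * b j)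
      with hRdef
    -- powers of B' are submatrices of powers of B
    have hsub : ∀ k : ℕ, ∀ i j : Fin n, (B ^ k) i.succ j.succ = (B' ^ k) i j := by
      intro k
      induction k with
      | zero => intro i j; simp [Matrix.one_apply, Fin.succ_inj]
      | succ k ihk =>
        intro i j
        rw [pow_succ', Matrix.mul_apply, Fin.sum_univ_succ, hcol i.succ, zero_mul, zero_add,
          pow_succ', Matrix.mul_apply]
        exact Finset.sum_congr rfl (fun m _ => by
          rw [hB'def, Matrix.submatrix_apply, ihk])
    have hB'nil : IsNilpotent B' := by
      obtain ⟨k, hk⟩ := hBnil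
      refine ⟨k, ?_⟩
      ext i j
      rw [← hsub k i j, hk]
      simp
    clear_value R D C' B' x b C B
    clear hA hBnil hsub
    have hNB : NN B = x + NN B' := by
      simp only [NN, hxdef, hbdef, hB'def, Fin.sum_univ_succ, Matrix.submatrix_apply, hcol,
        norm_zero]
      ring
    have hC00 : C 0 0 = (x : ℂ) := by
      rw [hCdef]
      simp only [Matrix.sub_apply, Matrix.mul_apply, Matrix.conjTranspose_apply]
      rw [Fin.sum_univ_succ, Fin.sum_univ_succ]
      simp only [hcol, star_zero, mul_zero, zero_mul, Finset.sum_const_zero, add_zero, zero_add,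
        sub_zero]
      rw [hxdef, hbdef]
      push_cast
      refine Finset.sum_congr rfl (fun j _ => ?_)
      rw [mul_star_eq]
      push_cast
      ring
    have hCsucc : ∀ i j : Fin n, C i.succ j.succ = C' i j - (starRingEnd ℂ) (b i) * b j := by
      intro i j
      rw [hCdef, hC'def, hB'def, hbdef]
      simp only [Matrix.sub_apply, Matrix.mul_apply, Matrix.conjTranspose_apply,
        Matrix.submatrix_apply]
      rw [Fin.sum_univ_succ, Fin.sum_univ_succ]
      simp only [hcol, star_zero, mul_zero, zero_mul, zero_add, Finset.sum_const_zero, add_zero]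
      have hstar : ∀ z : ℂ, star z = (starRingEnd ℂ) z := fun _ => rfl
      rw [← hstar]
      ring
    have hND : x ^ 2 + NN D ≤ NN C := by
      have expand : NN C = ‖C 0 0‖ ^ 2 + ∑ j : Fin n, ‖C 0 j.succ‖ ^ 2
          + ∑ i : Fin n, (‖C i.succ 0‖ ^ 2 + ∑ j : Fin n, ‖C i.succ j.succ‖ ^ 2) := by
        simp only [NN, Fin.sum_univ_succ]
      have h00 : ‖C 0 0‖ ^ 2 = x ^ 2 := by
        rw [hC00, Complex.norm_real, Real.norm_eq_abs, abs_of_nonneg hx0]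
      have hDe : NN D = ∑ i : Fin n, ∑ j : Fin n, ‖C i.succ j.succ‖ ^ 2 := by
        rw [hDdef]; rfl
      have hs1 : 0 ≤ ∑ j : Fin n, ‖C 0 j.succ‖ ^ 2 :=
        Finset.sum_nonneg fun j _ => sq_nonneg _
      have hs2 : ∑ i : Fin n, ∑ j : Fin n, ‖C i.succ j.succ‖ ^ 2
          ≤ ∑ i : Fin n, (‖C i.succ 0‖ ^ 2 + ∑ j : Fin n, ‖C i.succ j.succ‖ ^ 2) :=
        Finset.sum_le_sum (fun i _ => le_add_of_nonneg_left (sq_nonneg _))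
      rw [expand, h00, hDe]
      linarith
    have hNR : NN R = x ^ 2 := by
      have h : NN R = (∑ i, ‖b i‖ ^ 2) * (∑ j, ‖b j‖ ^ 2) := by
        rw [Finset.sum_mul_sum]
        simp [NN, hRdef, norm_mul, mul_pow, RCLike.norm_conj]
      rw [h, ← hxdef, sq]
    have hsplit : C' = D + R := by
      ext i j
      have h := hCsucc i j
      simp only [Matrix.add_apply, hDdef, hRdef, Matrix.of_apply]
      rw [h]
      ring
    have hC'le : NN C' ≤ (Real.sqrt (NN D) + x) ^ 2 := by
      have htri := sqrt_NN_add D R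
      rw [← hsplit] at htri
      have hxr : Real.sqrt (NN R) = x := by rw [hNR, Real.sqrt_sq hx0]
      rw [hxr] at htri
      calc NN C' = Real.sqrt (NN C') ^ 2 := (Real.sq_sqrt (NN_nonneg _)).symm
        _ ≤ (Real.sqrt (NN D) + x) ^ 2 := by
            apply pow_le_pow_left₀ (Real.sqrt_nonneg _) htri
    have hIH : NN B' ^ 2 ≤ 4 ^ (n - 1) * NN C' := by
      rw [hC'def]; exact ih B' hB'nil
    -- final assembly
    rw [hNA, hNC, hNB, Nat.add_sub_cancel]
    set s : ℝ := NN B' with hsdef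
    set y : ℝ := Real.sqrt (NN D) with hydef
    have hy0 : 0 ≤ y := Real.sqrt_nonneg _
    have hy2 : y ^ 2 = NN D := Real.sq_sqrt (NN_nonneg D)
    have hs0 : 0 ≤ s := NN_nonneg _
    have hNCge : x ^ 2 + y ^ 2 ≤ NN C := by rw [hy2]; exact hND
    have hNC0 : 0 ≤ NN C := NN_nonneg _
    rcases Nat.lt_or_ge n 2 with hn | hn
    · have hs : s = 0 := NN_small (by omega) B' hB'nil
      rw [hs, add_zero]
      have h4 : (1 : ℝ) ≤ 4 ^ n := one_le_pow₀ (by norm_num)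
      nlinarith [sq_nonneg y]
    · set c : ℝ := 2 ^ (n - 1) with hcdef
      have hc2 : (2 : ℝ) ≤ c := by
        rw [hcdef]
        calc (2 : ℝ) = 2 ^ 1 := (pow_one 2).symm
          _ ≤ 2 ^ (n - 1) := pow_le_pow_right₀ one_le_two (by omega)
      have hc0 : (0 : ℝ) ≤ c := by linarith
      have hcsq : c ^ 2 = 4 ^ (n - 1) := by
        rw [hcdef, ← pow_mul, mul_comm, pow_mul]
        norm_num
      have h4n : (4 : ℝ) ^ n = 4 * 4 ^ (n - 1) := by
        conv_lhs => rw [show n = (n - 1) + 1 by omega]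
        rw [pow_succ]
        ring
      have hsle : s ≤ c * (y + x) := by
        have h1 : s ^ 2 ≤ c ^ 2 * (y + x) ^ 2 := by
          calc s ^ 2 ≤ 4 ^ (n - 1) * NN C' := hIH
            _ ≤ 4 ^ (n - 1) * (y + x) ^ 2 := by
                exact mul_le_mul_of_nonneg_left hC'le (pow_nonneg (by norm_num) _)
            _ = c ^ 2 * (y + x) ^ 2 := by rw [hcsq]
        calc s = Real.sqrt (s ^ 2) := (Real.sqrt_sq hs0).symm
          _ ≤ Real.sqrt (c ^ 2 * (y + x) ^ 2) := Real.sqrt_le_sqrt h1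
          _ = c * (y + x) := by
              rw [← mul_pow, Real.sqrt_sq (mul_nonneg hc0 (by linarith))]
      have key2 : (x + c * (y + x)) ^ 2 ≤ 4 * c ^ 2 * (x ^ 2 + y ^ 2) := by
        nlinarith [mul_nonneg (mul_nonneg hc0 (by linarith : (0:ℝ) ≤ 1 + c)) (sq_nonneg (x - y)),
          mul_nonneg (mul_nonneg (by linarith : (0:ℝ) ≤ c - 2) (by linarith : (0:ℝ) ≤ 2*c + 1)) (sq_nonneg x),
          mul_nonneg (by nlinarith : (0:ℝ) ≤ 2*c^2 - c) (sq_nonneg y)]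
      calc (x + s) ^ 2 ≤ (x + c * (y + x)) ^ 2 := by
            apply pow_le_pow_left₀ (by linarith) (by linarith)
        _ ≤ 4 * c ^ 2 * (x ^ 2 + y ^ 2) := key2
        _ ≤ 4 * c ^ 2 * NN C := by
            exact mul_le_mul_of_nonneg_left hNCge (mul_nonneg (by norm_num) (sq_nonneg c))
        _ = 4 ^ n * NN C := by rw [hcsq, ← h4n]

/-- Commutator estimate for nilpotent matrices: if `A` is a nilpotent `n×n` complex
matrix, then the Hilbert–Schmidt norms satisfy `‖[A,A*]‖² ≥ ‖A‖⁴/4^{n−1}`, where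
`‖M‖² = tr(M M*)`. -/
theorem stmt_11 (n : ℕ) (A : Matrix (Fin n) (Fin n) ℂ) (hA : IsNilpotent A) :
    ((Matrix.trace (A * Aᴴ)).re) ^ 2 / 4 ^ (n - 1) ≤
      (Matrix.trace ((A * Aᴴ - Aᴴ * A) * (A * Aᴴ - Aᴴ * A)ᴴ)).re := by
  rw [trace_re_eq_NN, trace_re_eq_NN]
  rw [div_le_iff₀ (by positivity)]
  have h := key n A hA
  linarith [mul_comm ((4:ℝ) ^ (n-1)) (NN (A * Aᴴ - Aᴴ * A))]
end

section
/- Let u : Δ → ℝ be a nonnegative C² function on the unit disk satisfying the differential inequality Δu ≥ c·u² (with Δ the Laplacian ∂∂̄ up to normalization, and c > 0). Then u(z) ≤ C/(c(1−|z|²)²) for all z ∈ Δ, for a universal constant C. In particular, if f = |θ|² satisfies ∂∂̄ log f ≥ f/4^{N−1} on the unit disk, then f(0) ≤ 4^{N−1} · C₀ for a universal constant C₀. -/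
open Metric

/-- Derivative along a line. -/
lemma line_hasDerivAt {f : ℂ → ℝ} (hf : Differentiable ℝ f) (p v : ℂ) (t : ℝ) :
    HasDerivAt (fun s : ℝ => f (p + s • v)) (fderiv ℝ f (p + t • v) v) t := by
  have hl : HasDerivAt (fun s : ℝ => p + s • v) v t := by
    simpa using ((hasDerivAt_id t).smul_const v).const_add p
  exact ((hf _).hasFDerivAt).comp_hasDerivAt t hl

lemma fderiv_apply_diff {u : ℂ → ℝ} (hu : ContDiff ℝ 2 u) (v : ℂ) :
    Differentiable ℝ (fun w => fderiv ℝ u w v) := by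
  have h1 : ContDiff ℝ 1 (fun w => fderiv ℝ u w) :=
    hu.fderiv_right (by norm_num)
  exact ((ContinuousLinearMap.apply ℝ ℝ v).contDiff.comp h1).differentiable one_ne_zero

/-- Second derivative test at a local max. -/
lemma second_deriv_test {g g' : ℝ → ℝ} {a : ℝ}
    (hg : ∀ t, HasDerivAt g (g' t) t) (hg' : HasDerivAt g' a 0)
    (hmax : IsLocalMax g 0) : a ≤ 0 := by
  by_contra h
  push_neg at h
  have h0 : g' 0 = 0 := by
    have h1 := hmax.deriv_eq_zero
    rwa [(hg 0).deriv] at h1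
  have hslope : Filter.Tendsto (fun t => g' t / t) (nhdsWithin 0 {(0:ℝ)}ᶜ) (nhds a) := by
    have h2 := hasDerivAt_iff_tendsto_slope.mp hg'
    have heq : slope g' 0 = fun t => g' t / t := by
      funext t; simp [slope_def_field, h0]
    rwa [heq] at h2
  have hev : ∀ᶠ t in nhdsWithin 0 {(0:ℝ)}ᶜ, a/2 < g' t / t :=
    hslope.eventually (eventually_gt_nhds (half_lt_self h))
  rw [eventually_nhdsWithin_iff] at hev
  rw [Metric.eventually_nhds_iff] at hev
  obtain ⟨δ, hδ, hδprop⟩ := hev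
  have hpos : ∀ t ∈ Set.Ioo (0:ℝ) δ, 0 < g' t := by
    intro t ht
    have h1 : a/2 < g' t / t := by
      apply hδprop
      · simp [Real.dist_eq, abs_of_pos ht.1]; linarith [ht.2]
      · simp; exact ne_of_gt ht.1
    have h2 : a/2 * t < g' t := (lt_div_iff₀ ht.1).mp h1
    nlinarith [half_pos h, ht.1]
  have hmono : StrictMonoOn g (Set.Icc 0 (δ/2)) := by
    apply strictMonoOn_of_deriv_pos (convex_Icc _ _)
    · exact fun t _ => (hg t).continuousAt.continuousWithinAt
    · intro t ht
      rw [interior_Icc] at ht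
      rw [(hg t).deriv]
      exact hpos t ⟨ht.1, by linarith [ht.2]⟩
  obtain ⟨ε, hε, hεprop⟩ := Metric.eventually_nhds_iff.mp hmax
  set t := min (δ/2) ε / 2 with htdef
  have ht0 : 0 < t := by positivity
  have htδ : t ≤ δ/2 := by
    have := min_le_left (δ/2) ε; simp [htdef]; linarith
  have htε : t < ε := by
    have := min_le_right (δ/2) ε; simp [htdef]; linarith
  have h1 : g 0 < g t :=
    hmono (Set.mem_Icc.mpr ⟨le_rfl, by positivity⟩) (Set.mem_Icc.mpr ⟨ht0.le, htδ⟩) ht0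
  have h2 : g t ≤ g 0 := hεprop (by simp [Real.dist_eq, abs_of_pos ht0, htε])
  linarith

section
variable {u : ℂ → ℝ}

/-- At a local max of `t ↦ (K-(s+t)²)² u(p+tv)`, first and second derivative info. -/
lemma line_max (hu : ContDiff ℝ 2 u) (p v : ℂ) (K s : ℝ) {g : ℝ → ℝ}
    (hgeq : ∀ t, g t = (K - (s+t)^2)^2 * u (p + t • v)) (hmax : IsLocalMax g 0) :
    2*(K - s^2)*(-(2*s)) * u p + (K - s^2)^2 * fderiv ℝ u p v = 0 ∧
    (8*s^2 - 4*(K-s^2)) * u p + 2*(2*(K-s^2)*(-(2*s))) * fderiv ℝ u p v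
      + (K-s^2)^2 * fderiv ℝ (fun w => fderiv ℝ u w v) p v ≤ 0 := by
  have hgfun : g = fun t => (K - (s+t)^2)^2 * u (p + t • v) := funext hgeq
  subst hgfun
  set b' : ℝ → ℝ := fun t => fderiv ℝ u (p + t • v) v with hb'def
  have hudiff : Differentiable ℝ u := hu.differentiable two_ne_zero
  have hb : ∀ t, HasDerivAt (fun s : ℝ => u (p + s • v)) (b' t) t :=
    fun t => line_hasDerivAt hudiff p v t
  -- derivative of the polynomial factor
  have hq : ∀ t : ℝ, HasDerivAt (fun t => (K - (s+t)^2)^2)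
      (2*(K - (s+t)^2) * (-(2*(s+t)))) t := by
    intro t
    have h1 : HasDerivAt (fun t : ℝ => K - (s+t)^2) (-(2*(s+t))) t := by
      have h2 : HasDerivAt (fun t : ℝ => s + t) 1 t := (hasDerivAt_id t).const_add s
      have h3 := h2.pow 2
      simpa using (h3.const_sub K)
    simpa using h1.fun_pow 2
  -- first derivative of g
  have hg : ∀ t, HasDerivAt (fun t => (K - (s+t)^2)^2 * u (p + t • v))
      (2*(K - (s+t)^2) * (-(2*(s+t))) * u (p + t • v) + (K - (s+t)^2)^2 * b' t) t :=
    fun t => (hq t).mul (hb t)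
  -- second derivative pieces at 0
  have hq' : HasDerivAt (fun t => 2*(K - (s+t)^2) * (-(2*(s+t))))
      ((2*(-(2*s))) * (-(2*s)) + (2*(K - s^2)) * (-2)) 0 := by
    have h1 : HasDerivAt (fun t : ℝ => 2*(K - (s+t)^2)) (2*(-(2*(s+0)))) 0 := by
      have h2 : HasDerivAt (fun t : ℝ => s + t) 1 0 := (hasDerivAt_id 0).const_add s
      have h3 := (h2.pow 2).const_sub K
      simpa using (h3.const_mul 2)
    have h2 : HasDerivAt (fun t : ℝ => -(2*(s+t))) (-2) 0 := by
      have h3 : HasDerivAt (fun t : ℝ => s + t) 1 0 := (hasDerivAt_id 0).const_add s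
      simpa using (h3.const_mul 2).fun_neg
    have := h1.fun_mul h2
    simpa using this
  have hb'' : HasDerivAt b' (fderiv ℝ (fun w => fderiv ℝ u w v) p v) 0 := by
    have h1 := line_hasDerivAt (fderiv_apply_diff hu v) p v 0
    simpa [hb'def] using h1
  have hsecond : HasDerivAt (fun t => 2*(K - (s+t)^2) * (-(2*(s+t))) * u (p + t • v)
      + (K - (s+t)^2)^2 * b' t)
      (((2*(-(2*s))) * (-(2*s)) + (2*(K - s^2)) * (-2)) * u (p + (0:ℝ) • v)
        + 2*(K - (s+(0:ℝ))^2) * (-(2*(s+0))) * b' 0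
        + (2*(K - (s+(0:ℝ))^2) * (-(2*(s+0))) * b' 0 + (K - (s+(0:ℝ))^2)^2
            * fderiv ℝ (fun w => fderiv ℝ u w v) p v)) 0 :=
    (hq'.mul (hb 0)).add ((hq 0).mul hb'')
  have hd2 := second_deriv_test hg hsecond hmax
  have hd1 : 2*(K - (s+(0:ℝ))^2) * (-(2*(s+0))) * u (p + (0:ℝ) • v)
      + (K - (s+(0:ℝ))^2)^2 * b' 0 = 0 := by
    have h1 := hmax.deriv_eq_zero
    rwa [(hg 0).deriv] at h1
  have hb0 : b' 0 = fderiv ℝ u p v := by simp [hb'def]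
  have hup : (p + (0:ℝ) • v) = p := by simp
  rw [hup, hb0] at hd1 hd2
  constructor
  · linarith [hd1]
  · linarith [hd2]

/-- The Laplacian of a function `u : ℂ → ℝ`, written via second directional
derivatives in the directions `1` and `i`. -/
noncomputable def lap (u : ℂ → ℝ) (z : ℂ) : ℝ :=
  fderiv ℝ (fun w => fderiv ℝ u w 1) z 1 +
    fderiv ℝ (fun w => fderiv ℝ u w Complex.I) z Complex.I

lemma norm_sq_eq (z : ℂ) : ‖z‖^2 = z.re^2 + z.im^2 := by
  rw [Complex.sq_norm, Complex.normSq_apply]; ring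

set_option maxHeartbeats 1000000 in
lemma key_s12 {u : ℂ → ℝ} {c r : ℝ} (hc : 0 < c) (hu : ContDiff ℝ 2 u)
    (h0 : ∀ z ∈ ball (0:ℂ) 1, 0 ≤ u z)
    (hsub : ∀ z ∈ ball (0:ℂ) 1, c * u z ^ 2 ≤ lap u z)
    (hr0 : 0 < r) (hr1 : r < 1) :
    ∀ z₀ ∈ ball (0:ℂ) r, (r^2 - ‖z₀‖^2)^2 * u z₀ ≤ 32 / c := by
  intro z₀ hz₀
  set F : ℂ → ℝ := fun z => (r^2 - z.re^2 - z.im^2)^2 * u z with hFdef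
  have hFcont : Continuous F := by
    apply Continuous.mul
    · fun_prop
    · exact hu.continuous
  obtain ⟨p, hpmem, hpmax⟩ := (isCompact_closedBall (0:ℂ) r).exists_isMaxOn
    ⟨0, by simp [hr0.le]⟩ hFcont.continuousOn
  have hsub1 : ∀ z : ℂ, ‖z‖ ≤ r → z ∈ ball (0:ℂ) 1 := by
    intro z hz; simp only [mem_ball, dist_zero_right]; linarith
  have hpball : p ∈ ball (0:ℂ) 1 :=
    hsub1 p (by simpa [dist_zero_right] using hpmem)
  have hz₀' : z₀ ∈ closedBall (0:ℂ) r := ball_subset_closedBall hz₀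
  have hFz₀ : F z₀ = (r^2 - ‖z₀‖^2)^2 * u z₀ := by
    rw [hFdef]; simp only; rw [norm_sq_eq]; ring_nf
  have hFle : F z₀ ≤ F p := hpmax hz₀'
  rcases le_or_gt (F p) 0 with hFp | hFp
  · rw [← hFz₀]
    have : 0 < 32 / c := by positivity
    linarith
  · -- interior max case
    set x := p.re with hx
    set y := p.im with hy
    set φ := r^2 - x^2 - y^2 with hφdef
    set U := u p with hU
    have hUnn : 0 ≤ U := h0 p hpball
    have hFpval : F p = φ^2 * U := by rw [hFdef]
    have hφnn : 0 ≤ φ := by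
      have h1 : ‖p‖ ≤ r := by simpa [dist_zero_right] using hpmem
      have h2 : ‖p‖^2 ≤ r^2 := by nlinarith [norm_nonneg p]
      rw [norm_sq_eq] at h2; rw [hφdef]; linarith
    have hUpos : 0 < U := by
      rcases lt_or_ge 0 U with h | h
      · exact h
      · exfalso; nlinarith [sq_nonneg φ]
    have hφpos : 0 < φ := by
      rcases lt_or_ge 0 φ with h | h
      · exact h
      · exfalso
        have hφ0 : φ = 0 := le_antisymm h hφnn
        rw [hφ0] at hFpval
        simp at hFpval
        linarith
    have hpint : p ∈ ball (0:ℂ) r := by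
      simp only [mem_ball, dist_zero_right]
      have h2 : ‖p‖^2 < r^2 := by rw [norm_sq_eq]; rw [hφdef] at hφpos; linarith
      nlinarith [norm_nonneg p]
    have hloc : IsLocalMax F p := hpmax.isLocalMax (closedBall_mem_nhds_of_mem (by simpa using hpint))
    -- direction 1
    have hloc1 : IsLocalMax (fun t : ℝ => F (p + t • (1:ℂ))) 0 := by
      have hcont : Filter.Tendsto (fun t : ℝ => p + t • (1:ℂ)) (nhds 0) (nhds p) := by
        have : Continuous (fun t : ℝ => p + t • (1:ℂ)) := by fun_prop
        have h2 := this.tendsto 0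
        simpa using h2
      have h3 := hcont.eventually hloc
      show ∀ᶠ t in nhds (0:ℝ), F (p + t • (1:ℂ)) ≤ F (p + (0:ℝ) • (1:ℂ))
      simpa using h3
    have hlocI : IsLocalMax (fun t : ℝ => F (p + t • Complex.I)) 0 := by
      have hcont : Filter.Tendsto (fun t : ℝ => p + t • Complex.I) (nhds 0) (nhds p) := by
        have : Continuous (fun t : ℝ => p + t • Complex.I) := by fun_prop
        have h2 := this.tendsto 0
        simpa using h2
      have h3 := hcont.eventually hloc
      show ∀ᶠ t in nhds (0:ℝ), F (p + t • Complex.I) ≤ F (p + (0:ℝ) • Complex.I)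
      simpa using h3
    have heq1 : ∀ t : ℝ, F (p + t • (1:ℂ)) = ((r^2 - y^2) - (x+t)^2)^2 * u (p + t • (1:ℂ)) := by
      intro t
      rw [hFdef]
      simp only [Complex.add_re, Complex.add_im, Complex.real_smul, Complex.mul_re,
        Complex.mul_im, Complex.ofReal_re, Complex.ofReal_im, Complex.one_re, Complex.one_im]
      rw [hx, hy]
      ring_nf
    have heqI : ∀ t : ℝ, F (p + t • Complex.I) = ((r^2 - x^2) - (y+t)^2)^2 * u (p + t • Complex.I) := by
      intro t
      rw [hFdef]
      simp only [Complex.add_re, Complex.add_im, Complex.real_smul, Complex.mul_re,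
        Complex.mul_im, Complex.ofReal_re, Complex.ofReal_im, Complex.I_re, Complex.I_im]
      rw [hx, hy]
      ring_nf
    obtain ⟨e1, i1⟩ := line_max hu p 1 (r^2 - y^2) x heq1 hloc1
    obtain ⟨e2, i2⟩ := line_max hu p Complex.I (r^2 - x^2) y heqI hlocI
    set B₁ := fderiv ℝ u p 1 with hB₁
    set B₂ := fderiv ℝ u p Complex.I with hB₂
    set D₁ := fderiv ℝ (fun w => fderiv ℝ u w 1) p 1 with hD₁
    set D₂ := fderiv ℝ (fun w => fderiv ℝ u w Complex.I) p Complex.I with hD₂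
    have hK1 : r^2 - y^2 - x^2 = φ := by rw [hφdef]; ring
    rw [hK1] at e1 i1
    have hK2 : r^2 - x^2 - y^2 = φ := hφdef.symm
    rw [hK2] at e2 i2
    have hlap : c * U^2 ≤ D₁ + D₂ := by
      have h := hsub p hpball
      unfold lap at h
      exact h
    -- eliminate B₁ : φ * i1 + 8x * e1
    have e1x : (8*x) * (2*φ*(-(2*x)) * U + φ^2 * B₁) = 0 := by rw [e1]; ring
    have e2y : (8*y) * (2*φ*(-(2*y)) * U + φ^2 * B₂) = 0 := by rw [e2]; ring
    have i1φ : φ * ((8*x^2 - 4*φ) * U + 2*(2*φ*(-(2*x))) * B₁ + φ^2 * D₁) ≤ 0 :=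
      mul_nonpos_of_nonneg_of_nonpos hφpos.le i1
    have i2φ : φ * ((8*y^2 - 4*φ) * U + 2*(2*φ*(-(2*y))) * B₂ + φ^2 * D₂) ≤ 0 :=
      mul_nonpos_of_nonneg_of_nonpos hφpos.le i2
    have step1 : φ * ((8*x^2 - 4*φ) * U - 32*x^2*U + φ^2 * D₁) ≤ 0 := by
      linarith [i1φ, e1x]
    have step2 : φ * ((8*y^2 - 4*φ) * U - 32*y^2*U + φ^2 * D₂) ≤ 0 := by
      linarith [i2φ, e2y]
    have step1' : (8*x^2 - 4*φ) * U - 32*x^2*U + φ^2 * D₁ ≤ 0 := by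
      by_contra hcon
      push_neg at hcon
      linarith [step1, mul_pos hφpos hcon]
    have step2' : (8*y^2 - 4*φ) * U - 32*y^2*U + φ^2 * D₂ ≤ 0 := by
      by_contra hcon
      push_neg at hcon
      linarith [step2, mul_pos hφpos hcon]
    have hs1 : x^2 + y^2 ≤ 1 := by
      have : r^2 - x^2 - y^2 = φ := hφdef.symm
      nlinarith
    have hφ1 : φ ≤ 1 := by
      rw [hφdef]; nlinarith [sq_nonneg x, sq_nonneg y]
    have hD : φ^2 * (D₁ + D₂) ≤ 32 * U := by
      nlinarith [step1', step2', mul_nonneg (by linarith : (0:ℝ) ≤ 1 - (x^2+y^2)) hUnn,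
        mul_nonneg (by linarith : (0:ℝ) ≤ 1 - φ) hUnn]
    have hc2 : c * U^2 * φ^2 ≤ 32 * U := by
      have h3 := mul_le_mul_of_nonneg_left hlap (sq_nonneg φ)
      nlinarith [h3]
    have hfinal : c * (φ^2 * U) ≤ 32 := by
      by_contra hcon
      push_neg at hcon
      linarith [mul_lt_mul_of_pos_right hcon hUpos, hc2]
    have hFp32 : F p ≤ 32 / c := by
      rw [hFpval, le_div_iff₀ hc]
      linarith
    rw [← hFz₀]
    linarith

/-- Ahlfors–Schwarz-type lemma: there is a universal constant `C > 0` such that any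
nonnegative `C²` function `u` on the unit disk satisfying `Δu ≥ c·u²` obeys
`u(z) ≤ C/(c(1−|z|²)²)`. -/
theorem stmt_12 :
    ∃ C : ℝ, 0 < C ∧ ∀ (u : ℂ → ℝ) (c : ℝ), 0 < c → ContDiff ℝ 2 u →
      (∀ z ∈ ball (0:ℂ) 1, 0 ≤ u z) →
      (∀ z ∈ ball (0:ℂ) 1, c * (u z) ^ 2 ≤ lap u z) →
      ∀ z ∈ ball (0:ℂ) 1, u z ≤ C / (c * (1 - ‖z‖ ^ 2) ^ 2) := by
  refine ⟨128, by norm_num, ?_⟩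
  intro u c hc hu h0 hsub z hz
  set s₀ := ‖z‖^2 with hs₀
  have hz1 : ‖z‖ < 1 := by simpa [dist_zero_right] using hz
  have hs₀nn : 0 ≤ s₀ := sq_nonneg _
  have hs₀1 : s₀ < 1 := by
    rw [hs₀]; nlinarith [norm_nonneg z]
  set r := Real.sqrt ((1 + s₀)/2) with hr
  have hrsq : r^2 = (1 + s₀)/2 := Real.sq_sqrt (by linarith)
  have hr0 : 0 < r := Real.sqrt_pos.mpr (by linarith)
  have hr1 : r < 1 := by nlinarith
  have hzr : z ∈ ball (0:ℂ) r := by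
    simp only [mem_ball, dist_zero_right]
    nlinarith [norm_nonneg z]
  have hkey := key_s12 hc hu h0 hsub hr0 hr1 z hzr
  rw [hrsq, ← hs₀] at hkey
  have hd : 0 < c * (1 - s₀)^2 := mul_pos hc (pow_pos (by linarith) 2)
  rw [le_div_iff₀ hd]
  have h32 : ((1 + s₀)/2 - s₀)^2 * u z * c ≤ 32 := by
    rw [← le_div_iff₀ hc]; exact hkey
  nlinarith [h32]
end
end
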